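/- For all positive semidefinite matrices a, b, c, d of the same dimension, tr(|(a+b)^{1/2}(c+d)^{1/2}|) ≥ tr(|a^{1/2}c^{1/2}|) + tr(|b^{1/2}d^{1/2}|). -/

import Mathlib

open scoped Matrix ComplexOrder

/-- The positive square root of a positive semidefinite matrix (junk value `0` otherwise). -/
noncomputable def matSqrt {d : ℕ} (x : Matrix (Fin d) (Fin d) ℂ) : Matrix (Fin d) (Fin d) ℂ :=
  @dite _ x.PosSemidef (Classical.propDecidable _) (fun h => h.1.eigenvectorUnitary.1 * Matrix.diagonal ((↑) ∘ (√·) ∘ h.1.eigenvalues) *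
    (star h.1.eigenvectorUnitary : Matrix (Fin d) (Fin d) ℂ)) (fun _ => 0)

/-- The absolute value `|x| = (xᴴx)^{1/2}` of a matrix. -/
noncomputable def matAbs {d : ℕ} (x : Matrix (Fin d) (Fin d) ℂ) : Matrix (Fin d) (Fin d) ℂ :=
  matSqrt (xᴴ * x)

/-- Fidelity `F(σ,ρ) = tr |σ^{1/2} ρ^{1/2}|`. -/
noncomputable def fid {d : ℕ} (σ ρ : Matrix (Fin d) (Fin d) ℂ) : ℝ :=
  (matAbs (matSqrt σ * matSqrt ρ)).trace.re

/-- Bures distance `d_B(σ,ρ) = √(1 - F(σ,ρ))`. -/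
noncomputable def dB {d : ℕ} (σ ρ : Matrix (Fin d) (Fin d) ℂ) : ℝ :=
  Real.sqrt (1 - fid σ ρ)

/-!
Factor `√a = K₁ s`, `√b = K₂ s` through `s = √(a+b)` with `K₁*K₁ + K₂*K₂ ≤ 1`, and likewise
`√c = t L₁`, `√d = t L₂` through `t = √(c+d)` with `L₁L₁* + L₂L₂* ≤ 1`, using the pseudo-inverses
of `s` and `t`. With `Z = s t` it remains to show `tr|K₁ Z L₁| + tr|K₂ Z L₂| ≤ tr|Z|`. By polar
decomposition `tr|X| = tr(V*X)` for a contraction `V`, and `Z = W r r` with `W` a contraction and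
`r = |Z|^{1/2}`; the AM–GM inequality `2 Re tr(A*B) ≤ tr(A*A) + tr(B*B)` for the Hilbert–Schmidt
inner product then splits each `tr|Kᵢ Z Lᵢ|` into a term controlled by `LᵢLᵢ*` and one controlled
by `Kᵢ*Kᵢ`, and the two contraction conditions bound both sums by `tr(r r) = tr|Z|`.
-/

open scoped MatrixOrder

namespace Matrix

variable {ι 𝕜 : Type*} [Fintype ι] [RCLike 𝕜]

lemma trace_mono {A B : Matrix ι ι 𝕜} (h : A ≤ B) : A.trace ≤ B.trace := by
  simpa [trace_sub] using (le_iff.mp h).trace_nonneg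

lemma trace_star_mul_add_trace_star_mul_le (A B : Matrix ι ι 𝕜) :
    (star A * B).trace + (star B * A).trace ≤ (star A * A).trace + (star B * B).trace := by
  have h := (nonneg_iff_posSemidef.mp (star_mul_self_nonneg (A - B))).trace_nonneg
  rw [star_sub, sub_mul, mul_sub, mul_sub, trace_sub, trace_sub, trace_sub] at h
  rw [← sub_nonneg]
  convert h using 1
  ring

variable [DecidableEq ι]

lemma continuousOn_spectrum (f : ℝ → ℝ) (s : Matrix ι ι 𝕜) : ContinuousOn f (spectrum ℝ s) :=
  s.finite_real_spectrum.continuousOn f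

/-- For Hermitian `s` this is the Moore–Penrose inverse, since `(0 : ℝ)⁻¹ = 0`. -/
noncomputable def hermitianPinv (s : Matrix ι ι 𝕜) : Matrix ι ι 𝕜 := cfc (·⁻¹ : ℝ → ℝ) s

variable {s : Matrix ι ι 𝕜}

lemma isSelfAdjoint_hermitianPinv : IsSelfAdjoint (hermitianPinv s) := cfc_predicate _ _

lemma hermitianPinv_mul_self (hs : IsSelfAdjoint s) :
    hermitianPinv s * s = cfc (fun x : ℝ => x⁻¹ * x) s := by
  rw [cfc_mul _ _ s (continuousOn_spectrum _ s) (continuousOn_spectrum _ s), cfc_id' ℝ s,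
    hermitianPinv]

lemma mul_hermitianPinv_comm (hs : IsSelfAdjoint s) :
    s * hermitianPinv s = hermitianPinv s * s := by
  rw [hermitianPinv_mul_self hs, hermitianPinv]
  conv_lhs => arg 1; rw [← cfc_id' ℝ s]
  rw [← cfc_mul _ _ s (continuousOn_spectrum _ s) (continuousOn_spectrum _ s)]
  exact cfc_congr fun x _ => mul_comm _ _

lemma hermitianPinv_mul_self_le_one (hs : IsSelfAdjoint s) : hermitianPinv s * s ≤ 1 := by
  rw [hermitianPinv_mul_self hs]
  exact cfc_le_one _ _ fun x _ => by by_cases hx : x = 0 <;> simp [hx]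

lemma mul_hermitianPinv_mul_self (hs : IsSelfAdjoint s) : s * hermitianPinv s * s = s := by
  rw [mul_assoc, hermitianPinv_mul_self hs]
  conv_lhs => arg 1; rw [← cfc_id' ℝ s]
  rw [← cfc_mul _ _ s (continuousOn_spectrum _ s) (continuousOn_spectrum _ s)]
  conv_rhs => rw [← cfc_id' ℝ s]
  exact cfc_congr fun x _ => by rw [← mul_assoc, mul_inv_mul_cancel]

lemma hermitianPinv_mul_mul_self (hs : IsSelfAdjoint s) : hermitianPinv s * (s * s) = s := by
  rw [← mul_assoc, ← mul_hermitianPinv_comm hs, mul_hermitianPinv_mul_self hs]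

lemma hermitianPinv_mul_mul_self_mul_hermitianPinv (hs : IsSelfAdjoint s) :
    hermitianPinv s * (s * s) * hermitianPinv s = hermitianPinv s * s := by
  rw [hermitianPinv_mul_mul_self hs, mul_hermitianPinv_comm hs]

lemma mul_hermitianPinv_mul_of_star_mul_self_le {x : Matrix ι ι 𝕜} (hs : IsSelfAdjoint s)
    (h : star x * x ≤ s * s) : x * hermitianPinv s * s = x := by
  set q := 1 - hermitianPinv s * s
  have hq : IsSelfAdjoint q := by
    refine (IsSelfAdjoint.one _).sub ?_
    rw [hermitianPinv_mul_self hs]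
    exact cfc_predicate _ _
  have hsq : s * q = 0 := by
    rw [mul_sub, mul_one, ← mul_assoc, mul_hermitianPinv_mul_self hs, sub_self]
  have hxq : star (x * q) * (x * q) = 0 := by
    refine le_antisymm ?_ (star_mul_self_nonneg _)
    calc star (x * q) * (x * q) = star q * (star x * x) * q := by simp only [star_mul, mul_assoc]
      _ ≤ star q * (s * s) * q := star_left_conjugate_le_conjugate h q
      _ = 0 := by rw [hq.star_eq, ← mul_assoc, mul_assoc, hsq, mul_zero]
  rw [star_eq_conjTranspose, conjTranspose_mul_self_eq_zero, mul_sub, mul_one, sub_eq_zero] at hxq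
  rw [mul_assoc, ← hxq]

lemma exists_polar_decomposition (X : Matrix ι ι 𝕜) :
    ∃ W, star W * W ≤ 1 ∧ X = W * CFC.abs X ∧ star W * X = CFC.abs X := by
  set s := CFC.abs X
  have hs : IsSelfAdjoint s := (CFC.abs_nonneg X).isSelfAdjoint
  have hX : star X * X = s * s := (CFC.abs_mul_abs X).symm
  refine ⟨X * hermitianPinv s, ?_, ?_, ?_⟩
  · rw [star_mul, isSelfAdjoint_hermitianPinv.star_eq, mul_assoc, ← mul_assoc (star X), hX,
      ← mul_assoc, hermitianPinv_mul_mul_self_mul_hermitianPinv hs]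
    exact hermitianPinv_mul_self_le_one hs
  · exact (mul_hermitianPinv_mul_of_star_mul_self_le hs hX.le).symm
  · rw [star_mul, isSelfAdjoint_hermitianPinv.star_eq, mul_assoc, hX,
      hermitianPinv_mul_mul_self hs]

lemma exists_column_contraction {x₁ x₂ : Matrix ι ι 𝕜} (hs : IsSelfAdjoint s)
    (h : star x₁ * x₁ + star x₂ * x₂ = s * s) :
    ∃ K₁ K₂, star K₁ * K₁ + star K₂ * K₂ ≤ 1 ∧ x₁ = K₁ * s ∧ x₂ = K₂ * s := by
  have h₁ : star x₁ * x₁ ≤ s * s := h ▸ le_add_of_nonneg_right (star_mul_self_nonneg x₂)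
  have h₂ : star x₂ * x₂ ≤ s * s := h ▸ le_add_of_nonneg_left (star_mul_self_nonneg x₁)
  refine ⟨x₁ * hermitianPinv s, x₂ * hermitianPinv s, ?_,
    (mul_hermitianPinv_mul_of_star_mul_self_le hs h₁).symm,
    (mul_hermitianPinv_mul_of_star_mul_self_le hs h₂).symm⟩
  have hconj : ∀ x : Matrix ι ι 𝕜, star (x * hermitianPinv s) * (x * hermitianPinv s) =
      hermitianPinv s * (star x * x) * hermitianPinv s := fun x => by
    simp only [star_mul, isSelfAdjoint_hermitianPinv.star_eq, mul_assoc]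
  rw [hconj, hconj, ← add_mul, ← mul_add, h, hermitianPinv_mul_mul_self_mul_hermitianPinv hs]
  exact hermitianPinv_mul_self_le_one hs

lemma exists_row_contraction {t y₁ y₂ : Matrix ι ι 𝕜} (ht : IsSelfAdjoint t)
    (h : y₁ * star y₁ + y₂ * star y₂ = t * t) :
    ∃ L₁ L₂, L₁ * star L₁ + L₂ * star L₂ ≤ 1 ∧ y₁ = t * L₁ ∧ y₂ = t * L₂ := by
  obtain ⟨K₁, K₂, hK, h₁, h₂⟩ :=
    exists_column_contraction (x₁ := star y₁) (x₂ := star y₂) ht (by simpa using h)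
  refine ⟨star K₁, star K₂, by simpa using hK, ?_, ?_⟩
  · rw [← star_star y₁, h₁, star_mul, ht.star_eq]
  · rw [← star_star y₂, h₂, star_mul, ht.star_eq]

lemma two_mul_trace_abs_le {r : Matrix ι ι 𝕜} (hr : IsSelfAdjoint r) (K W L : Matrix ι ι 𝕜) :
    2 * (CFC.abs (K * (W * (r * r)) * L)).trace ≤
      (r * (L * star L) * r).trace + (star (W * r) * (star K * K) * (W * r)).trace := by
  set X := K * (W * (r * r)) * L
  obtain ⟨V, hV, -, hVX⟩ := exists_polar_decomposition X
  set A := V * star L * r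
  set B := K * W * r
  have hAB : (star A * B).trace = (CFC.abs X).trace := by
    calc (star A * B).trace = (r * (L * star V * K * W * r)).trace := by
          simp only [A, B, star_mul, star_star, hr.star_eq, mul_assoc]
      _ = (L * (star V * K * W * r * r)).trace := by
          rw [trace_mul_comm]; simp only [mul_assoc]
      _ = (star V * X).trace := by
          rw [trace_mul_comm]; simp only [X, mul_assoc]
      _ = _ := by rw [hVX]
  have hBA : (star B * A).trace = (CFC.abs X).trace := by
    rw [← star_star (star B * A), star_mul, star_star, star_eq_conjTranspose, trace_conjTranspose,
      hAB, ← trace_conjTranspose, ← star_eq_conjTranspose, (CFC.abs_nonneg X).isSelfAdjoint.star_eq]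
  have hA : star A * A ≤ r * (L * star L) * r := by
    calc star A * A = star (star L * r) * (star V * V) * (star L * r) := by
          simp only [A, star_mul, star_star, mul_assoc]
      _ ≤ star (star L * r) * 1 * (star L * r) := star_left_conjugate_le_conjugate hV _
      _ = r * (L * star L) * r := by
          simp only [star_mul, star_star, hr.star_eq, mul_one, mul_assoc]
  calc 2 * (CFC.abs X).trace = (star A * B).trace + (star B * A).trace := by rw [hAB, hBA, two_mul]
    _ ≤ (star A * A).trace + (star B * B).trace := trace_star_mul_add_trace_star_mul_le A B
    _ ≤ _ := by
      gcongr
      · exact trace_mono hA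
      · simp only [B, star_mul, mul_assoc]; rfl

theorem trace_abs_add_trace_abs_le (Z K₁ K₂ L₁ L₂ : Matrix ι ι 𝕜)
    (hK : star K₁ * K₁ + star K₂ * K₂ ≤ 1) (hL : L₁ * star L₁ + L₂ * star L₂ ≤ 1) :
    (CFC.abs (K₁ * Z * L₁)).trace + (CFC.abs (K₂ * Z * L₂)).trace ≤ (CFC.abs Z).trace := by
  obtain ⟨W, hW, hZ, -⟩ := exists_polar_decomposition Z
  set r := CFC.sqrt (CFC.abs Z)
  have hr : IsSelfAdjoint r := (CFC.sqrt_nonneg _).isSelfAdjoint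
  have hrr : r * r = CFC.abs Z := CFC.sqrt_mul_sqrt_self _ (CFC.abs_nonneg Z)
  have h₁ := two_mul_trace_abs_le hr K₁ W L₁
  have h₂ := two_mul_trace_abs_le hr K₂ W L₂
  rw [hrr, ← hZ] at h₁ h₂
  have hLsum : (r * (L₁ * star L₁) * r).trace + (r * (L₂ * star L₂) * r).trace ≤
      (CFC.abs Z).trace := by
    rw [← trace_add, ← add_mul, ← mul_add, ← hrr]
    refine trace_mono ?_
    simpa only [hr.star_eq, mul_one] using star_left_conjugate_le_conjugate hL r
  have hKsum : (star (W * r) * (star K₁ * K₁) * (W * r)).trace +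
      (star (W * r) * (star K₂ * K₂) * (W * r)).trace ≤ (CFC.abs Z).trace := by
    rw [← trace_add, ← add_mul, ← mul_add, ← hrr]
    refine trace_mono ?_
    calc star (W * r) * (star K₁ * K₁ + star K₂ * K₂) * (W * r)
        ≤ star (W * r) * 1 * (W * r) := star_left_conjugate_le_conjugate hK _
      _ = star r * (star W * W) * r := by simp only [star_mul, mul_one, mul_assoc]
      _ ≤ star r * 1 * r := star_left_conjugate_le_conjugate hW _
      _ = r * r := by rw [hr.star_eq, mul_one]
  refine le_of_mul_le_mul_left ?_ (two_pos : (0 : 𝕜) < 2)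
  calc 2 * ((CFC.abs (K₁ * Z * L₁)).trace + (CFC.abs (K₂ * Z * L₂)).trace)
      ≤ ((r * (L₁ * star L₁) * r).trace + (star (W * r) * (star K₁ * K₁) * (W * r)).trace) +
        ((r * (L₂ * star L₂) * r).trace + (star (W * r) * (star K₂ * K₂) * (W * r)).trace) := by
        rw [mul_add]; exact add_le_add h₁ h₂
    _ ≤ (CFC.abs Z).trace + (CFC.abs Z).trace := by
        rw [add_add_add_comm]; exact add_le_add hLsum hKsum
    _ = 2 * (CFC.abs Z).trace := (two_mul _).symm

theorem trace_abs_sqrt_mul_sqrt_add_le {a b c d : Matrix ι ι 𝕜}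
    (ha : 0 ≤ a) (hb : 0 ≤ b) (hc : 0 ≤ c) (hd : 0 ≤ d) :
    (CFC.abs (CFC.sqrt a * CFC.sqrt c)).trace + (CFC.abs (CFC.sqrt b * CFC.sqrt d)).trace ≤
      (CFC.abs (CFC.sqrt (a + b) * CFC.sqrt (c + d))).trace := by
  have hstar : ∀ x : Matrix ι ι 𝕜, star (CFC.sqrt x) = CFC.sqrt x :=
    fun x => (CFC.sqrt_nonneg x).isSelfAdjoint.star_eq
  obtain ⟨K₁, K₂, hK, hKa, hKb⟩ := exists_column_contraction (x₁ := CFC.sqrt a)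
    (x₂ := CFC.sqrt b) (hstar (a + b)) <| by
    rw [hstar, hstar, CFC.sqrt_mul_sqrt_self a ha, CFC.sqrt_mul_sqrt_self b hb,
      CFC.sqrt_mul_sqrt_self (a + b) (add_nonneg ha hb)]
  obtain ⟨L₁, L₂, hL, hLc, hLd⟩ := exists_row_contraction (y₁ := CFC.sqrt c)
    (y₂ := CFC.sqrt d) (hstar (c + d)) <| by
    rw [hstar, hstar, CFC.sqrt_mul_sqrt_self c hc, CFC.sqrt_mul_sqrt_self d hd,
      CFC.sqrt_mul_sqrt_self (c + d) (add_nonneg hc hd)]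
  rw [hKa, hKb, hLc, hLd]
  simpa only [mul_assoc] using
    trace_abs_add_trace_abs_le (CFC.sqrt (a + b) * CFC.sqrt (c + d)) K₁ K₂ L₁ L₂ hK hL

end Matrix

open Matrix

lemma matSqrt_eq_sqrt {d : ℕ} {x : Matrix (Fin d) (Fin d) ℂ} (hx : x.PosSemidef) :
    matSqrt x = CFC.sqrt x := by
  rw [CFC.sqrt_eq_real_sqrt x hx.nonneg, cfcₙ_eq_cfc, hx.1.cfc_eq, matSqrt, dif_pos hx]
  rfl

lemma matAbs_eq_abs {d : ℕ} (x : Matrix (Fin d) (Fin d) ℂ) : matAbs x = CFC.abs x :=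
  matSqrt_eq_sqrt (posSemidef_conjTranspose_mul_self x)

/-- superadditivity of the fidelity functional:
tr|(a+b)^{1/2}(c+d)^{1/2}| ≥ tr|a^{1/2}c^{1/2}| + tr|b^{1/2}d^{1/2}|. -/
theorem fidelity_superadditive {n : ℕ} (a b c d : Matrix (Fin n) (Fin n) ℂ)
    (ha : a.PosSemidef) (hb : b.PosSemidef) (hc : c.PosSemidef) (hd : d.PosSemidef) :
    (matAbs (matSqrt a * matSqrt c)).trace.re + (matAbs (matSqrt b * matSqrt d)).trace.re ≤
      (matAbs (matSqrt (a + b) * matSqrt (c + d))).trace.re := by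
  rw [matSqrt_eq_sqrt ha, matSqrt_eq_sqrt hb, matSqrt_eq_sqrt hc, matSqrt_eq_sqrt hd,
    matSqrt_eq_sqrt (ha.add hb), matSqrt_eq_sqrt (hc.add hd), matAbs_eq_abs, matAbs_eq_abs,
    matAbs_eq_abs, ← Complex.add_re]
  exact (Complex.le_def.mp
    (trace_abs_sqrt_mul_sqrt_add_le ha.nonneg hb.nonneg hc.nonneg hd.nonneg)).1
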